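/- The category PolyTr of polynomial trees has finite coproducts: the tree 𝐩 + 𝐪 defined by taking the coproduct of root polynomials and inheriting children from the respective summands satisfies the universal property of the coproduct, and the constant tree on the zero polynomial (no positions) is initial. -/
import Mathlib


/-- The universe polynomial composed with itself: positions are codes `(I, D)` for
polynomials, directions are position-direction pairs. -/
abbrev UU : PFunctor.{1} :=
  ⟨Σ I : Type, I → Type, fun a => ULift.{1} (Σ i : a.1, a.2 i)⟩

/-- Polynomial trees: elements of the terminal `(u ◁ u)`-coalgebra. -/
abbrev PolyTree : Type 1 := UU.M

/-- The position set of the root polynomial of a polynomial tree. -/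
def PolyTree.pos (p : PolyTree) : Type := p.dest.1.1

/-- The direction set of the root polynomial at position `i`. -/
def PolyTree.dir (p : PolyTree) (i : p.pos) : Type := p.dest.1.2 i

/-- The child tree at a position-direction pair. -/
def PolyTree.rest (p : PolyTree) {i : p.pos} (d : p.dir i) : PolyTree :=
  p.dest.2 ⟨⟨i, d⟩⟩

/-- The hom tower: `H 0 = 1`, `H (n+1) p q = Π i Σ j Π e Σ d, H n (children)`. -/
def H : ℕ → PolyTree → PolyTree → Type
  | 0, _, _ => PUnit
  | n+1, p, q =>
      ∀ i : p.pos, Σ j : q.pos, ∀ e : q.dir j, Σ d : p.dir i, H n (p.rest d) (q.rest e)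

/-- Projection of the hom tower. -/
def projH : ∀ (n : ℕ) (p q : PolyTree), H (n + 1) p q → H n p q
  | 0, _, _, _ => PUnit.unit
  | n+1, _, _, φ => fun i =>
      ⟨(φ i).1, fun e => ⟨((φ i).2 e).1, projH n _ _ ((φ i).2 e).2⟩⟩

/-- The morphism set of `PolyTr`: the limit of the hom tower. -/
def PTHom (p q : PolyTree) : Type :=
  { f : ∀ n, H n p q // ∀ n, projH n p q (f (n + 1)) = f n }

/-- Levelwise identity morphism. -/
def idH : ∀ (n : ℕ) (p : PolyTree), H n p p
  | 0, _ => PUnit.unit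
  | n+1, p => fun i => ⟨i, fun e => ⟨e, idH n (p.rest e)⟩⟩

/-- Levelwise composition of morphisms. -/
def compH : ∀ (n : ℕ) (p q r : PolyTree), H n p q → H n q r → H n p r
  | 0, _, _, _, _, _ => PUnit.unit
  | n+1, _, _, _, φ, ψ => fun i =>
      ⟨(ψ (φ i).1).1, fun f =>
        ⟨((φ i).2 ((ψ (φ i).1).2 f).1).1,
          compH n _ _ _ ((φ i).2 ((ψ (φ i).1).2 f).1).2 ((ψ (φ i).1).2 f).2⟩⟩

/-- Coproduct of polynomial trees: sum of root polynomials, children inherited from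
the respective summands. -/
def sumTree (p q : PolyTree) : PolyTree :=
  PFunctor.M.mk ⟨⟨p.pos ⊕ q.pos, Sum.elim p.dir q.dir⟩,
    fun d => match d.down with
      | ⟨.inl i, x⟩ => p.rest (i := i) x
      | ⟨.inr j, x⟩ => q.rest (i := j) x⟩

/-- The constant tree on the zero polynomial (no positions). -/
def zeroTree : PolyTree :=
  PFunctor.M.corec (fun _ : PUnit.{2} => ⟨⟨PEmpty, fun e => e.elim⟩, fun _ => PUnit.unit⟩)
    PUnit.unit


lemma projH_idH : ∀ (n : ℕ) (p : PolyTree), projH n p p (idH (n+1) p) = idH n p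
  | 0, _ => rfl
  | n+1, p => by
    funext i
    refine congrArg (Sigma.mk i) (funext fun e => ?_)
    exact congrArg (Sigma.mk e) (projH_idH n (p.rest e))

lemma projH_compH : ∀ (n : ℕ) (p q r : PolyTree) (φ : H (n+1) p q) (ψ : H (n+1) q r),
    projH n p r (compH (n+1) p q r φ ψ)
      = compH n p q r (projH n p q φ) (projH n q r ψ)
  | 0, _, _, _, _, _ => rfl
  | n+1, p, q, r, φ, ψ => by
    funext i
    refine congrArg (Sigma.mk _) (funext fun f => ?_)
    exact congrArg (Sigma.mk _) (projH_compH n _ _ _ _ _)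

lemma compH_idH : ∀ (n : ℕ) (p q : PolyTree) (ξ : H n p q),
    compH n p p q (idH n p) ξ = ξ
  | 0, _, _, _ => rfl
  | n+1, p, q, ξ => by
    funext i
    refine congrArg (Sigma.mk _) (funext fun f => ?_)
    exact congrArg (Sigma.mk _) (compH_idH n _ _ _)

namespace PolyCop
def H' (n : ℕ) (x y : UU.Obj PolyTree) : Type :=
  ∀ i : x.1.1, Σ j : y.1.1, ∀ e : y.1.2 j, Σ d : x.1.2 i,
    H n (x.2 ⟨⟨i, d⟩⟩) (y.2 ⟨⟨j, e⟩⟩)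

example (n : ℕ) (p q : PolyTree) : H (n+1) p q = H' n p.dest q.dest := rfl

def projH' (n : ℕ) (x y : UU.Obj PolyTree) (φ : H' (n+1) x y) : H' n x y :=
  fun i => ⟨(φ i).1, fun e => ⟨((φ i).2 e).1, projH n _ _ ((φ i).2 e).2⟩⟩

example (n : ℕ) (p q : PolyTree) : HEq (projH (n+1) p q) (projH' n p.dest q.dest) := HEq.rfl

def compH' (n : ℕ) (x y z : UU.Obj PolyTree) (φ : H' n x y) (ψ : H' n y z) : H' n x z :=
  fun i => ⟨(ψ (φ i).1).1, fun f =>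
    ⟨((φ i).2 ((ψ (φ i).1).2 f).1).1,
      compH n _ _ _ ((φ i).2 ((ψ (φ i).1).2 f).1).2 ((ψ (φ i).1).2 f).2⟩⟩

example (n : ℕ) (p q r : PolyTree) : HEq (compH (n+1) p q r) (compH' n p.dest q.dest r.dest) := HEq.rfl

def sumDest (p q : PolyTree) : UU.Obj PolyTree :=
  ⟨⟨p.pos ⊕ q.pos, Sum.elim p.dir q.dir⟩,
    fun d => match d.down with
      | ⟨.inl i, x⟩ => p.rest (i := i) x
      | ⟨.inr j, x⟩ => q.rest (i := j) x⟩

lemma sumTree_dest (p q : PolyTree) : (sumTree p q).dest = sumDest p q :=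
  PFunctor.M.dest_mk _

lemma zero_pos : PolyTree.pos zeroTree = PEmpty :=
  congrArg (fun s => s.1.1) (PFunctor.M.dest_corec
    (fun _ : PUnit.{2} => (⟨⟨PEmpty, fun e => e.elim⟩, fun _ => PUnit.unit⟩ : UU.Obj PUnit)) PUnit.unit)

def inlH (p q : PolyTree) : ∀ (n : ℕ) (x : UU.Obj PolyTree), x = sumDest p q → H' n p.dest x
  | n, _, rfl => fun i => ⟨Sum.inl i, fun e => ⟨e, idH n (p.rest e)⟩⟩

def inrH (p q : PolyTree) : ∀ (n : ℕ) (x : UU.Obj PolyTree), x = sumDest p q → H' n q.dest x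
  | n, _, rfl => fun j => ⟨Sum.inr j, fun e => ⟨e, idH n (q.rest e)⟩⟩

def pairH (p q r : PolyTree) (φ : PTHom p r) (ψ : PTHom q r) :
    ∀ (n : ℕ) (x : UU.Obj PolyTree), x = sumDest p q → H' n x r.dest
  | n, _, rfl => fun i => match i with
      | .inl i0 => φ.1 (n+1) i0
      | .inr j0 => ψ.1 (n+1) j0

example (p q : PolyTree) (n : ℕ) : inlH p q n (sumDest p q) rfl = fun i => ⟨Sum.inl i, fun e => ⟨e, idH n (p.rest e)⟩⟩ := rfl

lemma projH'_inlH (p q : PolyTree) (n : ℕ) (x : UU.Obj PolyTree) (h : x = sumDest p q) :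
    projH' n p.dest x (inlH p q (n+1) x h) = inlH p q n x h := by
  subst h
  funext i
  refine congrArg (Sigma.mk (Sum.inl i)) (funext fun e => ?_)
  exact congrArg (Sigma.mk e) (projH_idH n (p.rest e))

lemma projH'_inrH (p q : PolyTree) (n : ℕ) (x : UU.Obj PolyTree) (h : x = sumDest p q) :
    projH' n q.dest x (inrH p q (n+1) x h) = inrH p q n x h := by
  subst h
  funext j
  refine congrArg (Sigma.mk (Sum.inr j)) (funext fun e => ?_)
  exact congrArg (Sigma.mk e) (projH_idH n (q.rest e))

lemma projH'_pairH (p q r : PolyTree) (φ : PTHom p r) (ψ : PTHom q r) (n : ℕ)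
    (x : UU.Obj PolyTree) (h : x = sumDest p q) :
    projH' n x r.dest (pairH p q r φ ψ (n+1) x h) = pairH p q r φ ψ n x h := by
  subst h
  funext i
  cases i with
  | inl i0 => exact congrFun (φ.2 (n+1)) i0
  | inr j0 => exact congrFun (ψ.2 (n+1)) j0

lemma compH'_inlH (p q r : PolyTree) (n : ℕ) (ξ : H' n (sumDest p q) r.dest) :
    compH' n p.dest (sumDest p q) r.dest (inlH p q n _ rfl) ξ = fun i => ξ (Sum.inl i) := by
  funext i
  refine congrArg (Sigma.mk _) (funext fun f => ?_)
  exact congrArg (Sigma.mk _) (compH_idH n _ _ _)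

lemma compH'_inrH (p q r : PolyTree) (n : ℕ) (ξ : H' n (sumDest p q) r.dest) :
    compH' n q.dest (sumDest p q) r.dest (inrH p q n _ rfl) ξ = fun j => ξ (Sum.inr j) := by
  funext j
  refine congrArg (Sigma.mk _) (funext fun f => ?_)
  exact congrArg (Sigma.mk _) (compH_idH n _ _ _)

lemma comp_inl_pair (p q r : PolyTree) (φ : PTHom p r) (ψ : PTHom q r) (n : ℕ)
    (x : UU.Obj PolyTree) (h : x = sumDest p q) :
    compH' n p.dest x r.dest (inlH p q n x h) (pairH p q r φ ψ n x h) = φ.1 (n+1) := by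
  subst h
  rw [compH'_inlH]
  rfl

lemma comp_inr_pair (p q r : PolyTree) (φ : PTHom p r) (ψ : PTHom q r) (n : ℕ)
    (x : UU.Obj PolyTree) (h : x = sumDest p q) :
    compH' n q.dest x r.dest (inrH p q n x h) (pairH p q r φ ψ n x h) = ψ.1 (n+1) := by
  subst h
  rw [compH'_inrH]
  rfl

lemma pair_unique (p q r : PolyTree) (φ : PTHom p r) (ψ : PTHom q r) (n : ℕ)
    (x : UU.Obj PolyTree) (h : x = sumDest p q) (ξ : H' n x r.dest)
    (h1 : compH' n p.dest x r.dest (inlH p q n x h) ξ = φ.1 (n+1))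
    (h2 : compH' n q.dest x r.dest (inrH p q n x h) ξ = ψ.1 (n+1)) :
    ξ = pairH p q r φ ψ n x h := by
  subst h
  rw [compH'_inlH] at h1
  rw [compH'_inrH] at h2
  funext i
  cases i with
  | inl i0 => exact congrFun h1 i0
  | inr j0 => exact congrFun h2 j0


def ident (p : PolyTree) : PTHom p p :=
  ⟨fun n => idH n p, fun n => projH_idH n p⟩

def comp (p q r : PolyTree) (φ : PTHom p q) (ψ : PTHom q r) : PTHom p r :=
  ⟨fun n => compH n p q r (φ.1 n) (ψ.1 n), fun n => by
    rw [projH_compH, φ.2, ψ.2]⟩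

def inl (p q : PolyTree) : PTHom p (sumTree p q) :=
  ⟨fun n => match n with
    | 0 => PUnit.unit
    | n+1 => inlH p q n _ (sumTree_dest p q),
   by
    intro n
    cases n with
    | zero => rfl
    | succ n => exact projH'_inlH p q n _ (sumTree_dest p q)⟩

def inr (p q : PolyTree) : PTHom q (sumTree p q) :=
  ⟨fun n => match n with
    | 0 => PUnit.unit
    | n+1 => inrH p q n _ (sumTree_dest p q),
   by
    intro n
    cases n with
    | zero => rfl
    | succ n => exact projH'_inrH p q n _ (sumTree_dest p q)⟩

def copair (p q r : PolyTree) (φ : PTHom p r) (ψ : PTHom q r) : PTHom (sumTree p q) r :=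
  ⟨fun n => match n with
    | 0 => PUnit.unit
    | n+1 => pairH p q r φ ψ n _ (sumTree_dest p q),
   by
    intro n
    cases n with
    | zero => rfl
    | succ n => exact projH'_pairH p q r φ ψ n _ (sumTree_dest p q)⟩

def zf (q : PolyTree) : PTHom zeroTree q :=
  ⟨fun n => match n with
    | 0 => PUnit.unit
    | _+1 => fun i => (cast zero_pos i).elim,
   by
    intro n
    cases n with
    | zero => rfl
    | succ n => funext i; exact (cast zero_pos i).elim⟩

end PolyCop


/-- `PolyTr` has finite coproducts: relative to the coinductive category structure
(identities `idH`, composition `compH`), the tree `p + q` with coproduct root and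
inherited children satisfies the universal property of the coproduct, and the
constant tree on the zero polynomial is initial. -/
theorem polyTr_has_finite_coproducts :
    ∃ (ident : ∀ p : PolyTree, PTHom p p)
      (comp : ∀ p q r : PolyTree, PTHom p q → PTHom q r → PTHom p r),
      (∀ (p : PolyTree) (n : ℕ), (ident p).1 n = idH n p) ∧
      (∀ (p q r : PolyTree) (φ : PTHom p q) (ψ : PTHom q r) (n : ℕ),
        (comp p q r φ ψ).1 n = compH n p q r (φ.1 n) (ψ.1 n)) ∧
      (∃ (inl : ∀ p q : PolyTree, PTHom p (sumTree p q))
         (inr : ∀ p q : PolyTree, PTHom q (sumTree p q)),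
        ∀ (p q r : PolyTree) (φ : PTHom p r) (ψ : PTHom q r),
          ∃! χ : PTHom (sumTree p q) r,
            comp p (sumTree p q) r (inl p q) χ = φ ∧
            comp q (sumTree p q) r (inr p q) χ = ψ) ∧
      (∀ q : PolyTree, ∃! _f : PTHom zeroTree q, True) := by
  refine ⟨PolyCop.ident, PolyCop.comp, fun p n => rfl, fun p q r φ ψ n => rfl,
    ⟨PolyCop.inl, PolyCop.inr, fun p q r φ ψ => ?_⟩, fun q => ?_⟩
  · refine ⟨PolyCop.copair p q r φ ψ, ⟨?_, ?_⟩, ?_⟩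
    · refine Subtype.ext (funext fun n => ?_)
      cases n with
      | zero => rfl
      | succ n => exact PolyCop.comp_inl_pair p q r φ ψ n _ (PolyCop.sumTree_dest p q)
    · refine Subtype.ext (funext fun n => ?_)
      cases n with
      | zero => rfl
      | succ n => exact PolyCop.comp_inr_pair p q r φ ψ n _ (PolyCop.sumTree_dest p q)
    · rintro χ ⟨h1, h2⟩
      refine Subtype.ext (funext fun n => ?_)
      cases n with
      | zero => rfl
      | succ n =>
        exact PolyCop.pair_unique p q r φ ψ n _ (PolyCop.sumTree_dest p q) (χ.1 (n+1))
          (congrFun (congrArg Subtype.val h1) (n+1))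
          (congrFun (congrArg Subtype.val h2) (n+1))
  · exact ⟨PolyCop.zf q, trivial, fun g _ => Subtype.ext (funext fun n =>
      match n with
      | 0 => rfl
      | n+1 => funext fun i => (cast PolyCop.zero_pos i).elim)⟩
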